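/- Let n ≥ 3 and F = X_1^{a_1} ⋯ X_n^{a_n}(X_1^{b_1} ⋯ X_{n-1}^{b_{n-1}} − X_n^{b_n}) with b_1 + ⋯ + b_{n-1} = b_n > 0 and all b_i > 0. Set q = ⌊(a_n+1)/b_n⌋. If a_i ≥ q b_i for all 1 ≤ i ≤ n−1, then no homogeneous polynomial P of degree a_n+1 whose coefficient of x_n^{a_n+1} is 1 satisfies P ∘ F = 0. -/

import Mathlib

open MvPolynomial

variable {K : Type*} [Field K] {n : ℕ}

/-- Contraction action of `R = K[x_1,…,x_n]` on the divided power algebra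
`S = K[X_1,…,X_n]`: on monomials, `x^a ∘ X^b = X^(b-a)` if `a ≤ b` and `0` otherwise,
extended bilinearly. -/
noncomputable def contract (f F : MvPolynomial (Fin n) K) : MvPolynomial (Fin n) K :=
  ∑ a ∈ f.support, ∑ b ∈ F.support,
    if a ≤ b then monomial (b - a) (coeff a f * coeff b F) else 0

lemma contract_zero_left (F : MvPolynomial (Fin n) K) : contract 0 F = 0 := by
  simp [contract]

lemma contract_add_left (f g F : MvPolynomial (Fin n) K) :
    contract (f + g) F = contract f F + contract g F := by
  classical
  have key : ∀ (p : MvPolynomial (Fin n) K) (s : Finset (Fin n →₀ ℕ)), p.support ⊆ s →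
      contract p F = ∑ a ∈ s, ∑ b ∈ F.support,
        if a ≤ b then monomial (b - a) (coeff a p * coeff b F) else 0 := by
    intro p s hs
    refine Finset.sum_subset hs ?_
    intro a _ ha
    rw [notMem_support_iff] at ha
    simp [ha]
  rw [key f (f.support ∪ g.support) Finset.subset_union_left,
      key g (f.support ∪ g.support) Finset.subset_union_right,
      key (f + g) (f.support ∪ g.support) (fun a ha => support_add ha),
      ← Finset.sum_add_distrib]
  refine Finset.sum_congr rfl fun a _ => ?_
  rw [← Finset.sum_add_distrib]
  refine Finset.sum_congr rfl fun b _ => ?_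
  split_ifs with h
  · rw [coeff_add, add_mul, map_add (monomial (b - a)) _ _]
  · rw [add_zero]

/-- The annihilator of `F` under the contraction action, as an ideal of `R`;
its members are exactly the `f` with `f ∘ F = 0`. -/
noncomputable def annIdeal (F : MvPolynomial (Fin n) K) : Ideal (MvPolynomial (Fin n) K) where
  carrier := {f | ∀ g, contract (g * f) F = 0}
  zero_mem' := fun g => by rw [mul_zero, contract_zero_left]
  add_mem' := fun {p q} hp hq g => by
    rw [mul_add, contract_add_left, hp g, hq g, add_zero]
  smul_mem' := fun c p hp g => by
    rw [smul_eq_mul, ← mul_assoc]; exact hp (g * c)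

/-- Complete intersection ideal: generated by a regular sequence of length `c`. -/
def IsCI (c : ℕ) {R : Type*} [CommRing R] (I : Ideal R) : Prop :=
  ∃ gs : List R, gs.length = c ∧ RingTheory.Sequence.IsRegular R gs ∧
    Ideal.span {x | x ∈ gs} = I

/-- The degree-`i` component of `A_F = R/Ann_R(F)`. -/
noncomputable def quotComponent (F : MvPolynomial (Fin n) K) (i : ℕ) :
    Submodule K ((MvPolynomial (Fin n) K) ⧸ annIdeal F) :=
  (homogeneousSubmodule (Fin n) K i).map (Ideal.Quotient.mkₐ K (annIdeal F)).toLinearMap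

/-- The strong Lefschetz property for a graded algebra given by the family `𝒜` of its
graded components: some linear form `ℓ` has all multiplication maps
`×ℓ^k : 𝒜_i → 𝒜_{i+k}` of maximal rank (injective or surjective). -/
def SLP (K : Type*) {A : Type*} [CommSemiring K] [CommRing A] [Algebra K A]
    (𝒜 : ℕ → Submodule K A) : Prop :=
  ∃ ℓ ∈ 𝒜 1, ∀ i k : ℕ, 0 < k →
    (∀ x ∈ 𝒜 i, ℓ ^ k * x = 0 → x = 0) ∨ (∀ y ∈ 𝒜 (i + k), ∃ x ∈ 𝒜 i, ℓ ^ k * x = y)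


lemma coeff_contract' (f F : MvPolynomial (Fin n) K) (d : Fin n →₀ ℕ) :
    coeff d (contract f F) =
      ∑ b ∈ F.support, if d ≤ b then coeff (b - d) f * coeff b F else 0 := by
  classical
  rw [contract]
  simp only [coeff_sum]
  rw [Finset.sum_comm]
  refine Finset.sum_congr rfl fun bb _ => ?_
  have key : ∀ aa ∈ f.support,
      coeff d (if aa ≤ bb then monomial (bb - aa) (coeff aa f * coeff bb F) else 0)
      = if aa = bb - d ∧ d ≤ bb then coeff aa f * coeff bb F else 0 := by
    intro aa _
    split_ifs with h1 h2 h3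
    · rw [coeff_monomial, if_pos (by rw [h2.1]; exact tsub_tsub_cancel_of_le h2.2)]
    · rw [coeff_monomial, if_neg]
      intro he
      exact h2 ⟨by rw [← he, tsub_tsub_cancel_of_le h1], he ▸ tsub_le_self⟩
    · exact absurd (h3.1 ▸ tsub_le_self) h1
    · exact coeff_zero d
  rw [Finset.sum_congr rfl key]
  by_cases hd : d ≤ bb
  · simp only [hd, and_true]
    rw [Finset.sum_ite_eq' f.support (bb - d) (fun aa => coeff aa f * coeff bb F)]
    split_ifs with hmem
    · rfl
    · rw [notMem_support_iff.mp hmem, zero_mul]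
  · simp [hd]

lemma prod_X_pow_eq_monomial' (s : Finset (Fin n)) (f : Fin n → ℕ) :
    (∏ i ∈ s, (X i : MvPolynomial (Fin n) K) ^ f i) =
      monomial (∑ i ∈ s, Finsupp.single i (f i)) (1 : K) := by
  classical
  induction s using Finset.induction with
  | empty => simp [monomial_zero']
  | @insert x t h ih =>
      rw [Finset.prod_insert h, Finset.sum_insert h, ih, X_pow_eq_monomial, monomial_mul, one_mul]

/-- If `a_i ≥ q b_i` for all `1 ≤ i ≤ n-1`, then no homogeneous
polynomial `P` of degree `a_n+1` whose coefficient of `x_n^{a_n+1}` is `1` satisfies `P ∘ F = 0`. -/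
theorem stmt10 [CharZero K] {m : ℕ} (hn : 3 ≤ m + 1)
    (a b : Fin (m + 1) → ℕ) (hb : ∀ i, 0 < b i)
    (hne : (Finset.Iio (Fin.last m)).Nonempty)
    (hsum : ∑ i ∈ Finset.Iio (Fin.last m), b i = b (Fin.last m))
    (F : MvPolynomial (Fin (m + 1)) K)
    (hF : F = (∏ i, (X i : MvPolynomial (Fin (m + 1)) K) ^ a i) *
      ((∏ i ∈ Finset.Iio (Fin.last m), (X i : MvPolynomial (Fin (m + 1)) K) ^ b i)
        - X (Fin.last m) ^ b (Fin.last m)))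
    (q : ℕ) (hq : q = (a (Fin.last m) + 1) / b (Fin.last m))
    (hge : ∀ i ∈ Finset.Iio (Fin.last m), q * b i ≤ a i)
    (P : MvPolynomial (Fin (m + 1)) K)
    (hP : P ∈ homogeneousSubmodule (Fin (m + 1)) K (a (Fin.last m) + 1))
    (hPcoeff : coeff (Finsupp.single (Fin.last m) (a (Fin.last m) + 1)) P = 1) :
    contract P F ≠ 0 := by
  classical
  set L := Fin.last m with hLdef
  set A : Fin (m + 1) →₀ ℕ := ∑ i, Finsupp.single i (a i) with hAdef
  set B : Fin (m + 1) →₀ ℕ := ∑ i ∈ Finset.Iio L, Finsupp.single i (b i) with hBdef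
  have hAi : ∀ i, A i = a i := by
    intro i
    rw [hAdef, Finsupp.finset_sum_apply]
    simp [Finsupp.single_apply]
  have hlt : ∀ i : Fin (m + 1), i ≠ L → i < L := fun i hi => Fin.lt_last_iff_ne_last.mpr hi
  have hBi : ∀ i, B i = if i = L then 0 else b i := by
    intro i
    rw [hBdef, Finsupp.finset_sum_apply]
    by_cases hi : i = L
    · rw [if_pos hi]
      apply Finset.sum_eq_zero
      intro j hj
      rw [Finset.mem_Iio] at hj
      exact Finsupp.single_eq_of_ne' (by rw [hi]; exact Fin.ne_of_lt hj)
    · rw [if_neg hi, Finset.sum_eq_single i (fun j _ hji => Finsupp.single_eq_of_ne' hji)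
        (fun hi' => absurd (Finset.mem_Iio.mpr (hlt i hi)) hi')]
      exact Finsupp.single_eq_same
  set M1 := A + B with hM1def
  set M2 := A + Finsupp.single L (b L) with hM2def
  have hM1i : ∀ i, M1 i = a i + if i = L then 0 else b i := by
    intro i; rw [hM1def, Finsupp.add_apply, hAi, hBi]
  have hM2i : ∀ i, M2 i = a i + if i = L then b L else 0 := by
    intro i; rw [hM2def, Finsupp.add_apply, hAi, Finsupp.single_apply]
    by_cases hi : i = L
    · rw [if_pos hi.symm, if_pos hi]
    · rw [if_neg (fun h => hi h.symm), if_neg hi]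
  have hbL := hb L
  have hM12 : M1 ≠ M2 := by
    intro h
    have hL : M1 L = M2 L := by rw [h]
    rw [hM1i, hM2i, if_pos rfl, if_pos rfl] at hL
    omega
  -- F as a difference of two monomials
  have hFeq : F = monomial M1 (1 : K) + monomial M2 (-1 : K) := by
    rw [hF, mul_sub, prod_X_pow_eq_monomial', prod_X_pow_eq_monomial', X_pow_eq_monomial,
      monomial_mul, monomial_mul, one_mul]
    rw [hM1def, hM2def, hAdef, hBdef]
    rw [sub_eq_add_neg, ← map_neg]
  have hsupp : F.support ⊆ {M1, M2} := by
    rw [hFeq]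
    intro x hx
    rcases Finset.mem_union.mp (support_add hx) with h | h
    · exact Finset.mem_insert.mpr (Or.inl (Finset.mem_singleton.mp (support_monomial_subset h)))
    · exact Finset.mem_insert.mpr (Or.inr (support_monomial_subset h))
  have hc1 : coeff M1 F = 1 := by
    rw [hFeq, coeff_add, coeff_monomial, coeff_monomial, if_pos rfl,
      if_neg (fun h => hM12 h.symm), add_zero]
  have hc2 : coeff M2 F = -1 := by
    rw [hFeq, coeff_add, coeff_monomial, coeff_monomial, if_pos rfl, if_neg hM12, zero_add]
  have hcoeff : ∀ d, coeff d (contract P F) =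
      (if d ≤ M1 then coeff (M1 - d) P * 1 else 0) +
      (if d ≤ M2 then coeff (M2 - d) P * (-1) else 0) := by
    intro d
    rw [coeff_contract', Finset.sum_subset hsupp (fun x _ hx => by
      rw [notMem_support_iff.mp hx, mul_zero, ite_self]),
      Finset.sum_pair hM12, hc1, hc2]
  -- the chain of monomials
  set c : ℕ → (Fin (m + 1) →₀ ℕ) :=
    fun k => k • B + Finsupp.single L (a L + 1 - k * b L) with hcdef
  have hck : ∀ k i, c k i = if i = L then a L + 1 - k * b L else k * b i := by
    intro k i
    rw [hcdef]
    rw [Finsupp.add_apply, Finsupp.smul_apply, smul_eq_mul, Finsupp.single_apply, hBi]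
    by_cases hi : i = L
    · rw [hi]; simp
    · rw [if_neg hi, if_neg (fun h : L = i => hi h.symm), if_neg hi, Nat.add_zero]
  -- arithmetic facts
  have hq1 : b L * q + (a L + 1) % b L = a L + 1 := by rw [hq]; exact Nat.div_add_mod _ _
  have hq2 : (a L + 1) % b L < b L := Nat.mod_lt _ hbL
  have hqbl : q * b L ≤ a L + 1 := by rw [Nat.mul_comm]; omega
  have hqbl2 : a L + 1 < q * b L + b L := by rw [Nat.mul_comm]; omega
  have hkbl : ∀ k, k ≤ q → k * b L ≤ a L + 1 :=
    fun k hk => le_trans (Nat.mul_le_mul_right _ hk) hqbl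
  have hgei : ∀ i, i ≠ L → ∀ k, k ≤ q → k * b i ≤ a i := by
    intro i hi k hk
    exact le_trans (Nat.mul_le_mul_right _ hk) (hge i (Finset.mem_Iio.mpr (hlt i hi)))
  -- c k ≤ M2
  have hckM2 : ∀ k, k ≤ q → c k ≤ M2 := by
    intro k hk
    rw [Finsupp.le_def]
    intro i
    rw [hck, hM2i]
    by_cases hi : i = L
    · rw [if_pos hi, if_pos hi, hi]; omega
    · rw [if_neg hi, if_neg hi, Nat.add_zero]; exact hgei i hi k hk
  have hM2sub : ∀ k, k ≤ q → M2 - (M2 - c k) = c k :=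
    fun k hk => tsub_tsub_cancel_of_le (hckM2 k hk)
  -- step facts for k < q
  have hstep1 : ∀ k, k + 1 ≤ q → M2 - c k ≤ M1 := by
    intro k hk
    rw [Finsupp.le_def]
    intro i
    rw [Finsupp.tsub_apply, hM2i, hM1i, hck]
    have hs : (k + 1) * b L = k * b L + b L := Nat.succ_mul k (b L)
    have h1 := hkbl (k + 1) hk
    by_cases hi : i = L
    · rw [if_pos hi, if_pos hi, if_pos hi, hi]; omega
    · rw [if_neg hi, if_neg hi, if_neg hi]
      have := hgei i hi k (by omega)
      omega
  have hstep2 : ∀ k, k + 1 ≤ q → M1 - (M2 - c k) = c (k + 1) := by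
    intro k hk
    ext i
    rw [Finsupp.tsub_apply, Finsupp.tsub_apply, hM1i, hM2i, hck, hck]
    have hsL : (k + 1) * b L = k * b L + b L := Nat.succ_mul k (b L)
    have h1 := hkbl (k + 1) hk
    split_ifs with hi
    · rw [hi]; omega
    · have hsi : (k + 1) * b i = k * b i + b i := Nat.succ_mul k (b i)
      have := hgei i hi k (by omega)
      omega
  -- final obstruction
  have hlast : ¬ (M2 - c q ≤ M1) := by
    intro h
    have hL := h L
    rw [Finsupp.tsub_apply, hM2i, hM1i, hck, if_pos rfl, if_pos rfl, if_pos rfl] at hL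
    omega
  -- conclude
  intro hcon
  have hzero : ∀ d, coeff d (contract P F) = 0 := fun d => by rw [hcon]; exact coeff_zero d
  have hind : ∀ k, k ≤ q → coeff (c k) P = 1 := by
    intro k
    induction k with
    | zero =>
      intro _
      have hc0 : c 0 = Finsupp.single L (a L + 1) := by
        rw [hcdef]
        simp
      rw [hc0]
      exact hPcoeff
    | succ k ih =>
      intro hk1
      have hk : k ≤ q := Nat.le_of_succ_le hk1
      have hz := hzero (M2 - c k)
      rw [hcoeff, if_pos (hstep1 k hk1), hstep2 k hk1, if_pos tsub_le_self, hM2sub k hk,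
        mul_one, mul_neg_one, ih hk, ← sub_eq_add_neg] at hz
      exact sub_eq_zero.mp hz
  have hz := hzero (M2 - c q)
  rw [hcoeff, if_neg hlast, if_pos tsub_le_self, hM2sub q le_rfl, zero_add, mul_neg_one,
    neg_eq_zero, hind q le_rfl] at hz
  exact one_ne_zero hz
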